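/- Let J be a B(H)-ideal and S ∈ J. Then (S) is J-soft (i.e., (S) = J(S)) if and only if J(S)J = (S) = ⟨S⟩_J = (S)_J = (S)_J^ℝ, in which case (S) = J(S) = J(S)J. -/

import Mathlib

open scoped BigOperators
open TopologicalSpace

variable {H : Type*} [NormedAddCommGroup H] [InnerProductSpace ℂ H] [CompleteSpace H]

/-- `J` is a two-sided ideal of `B(H)`: an additive subgroup closed under left and
right multiplication by arbitrary bounded operators. -/
def IsBHIdeal (J : Set (H →L[ℂ] H)) : Prop :=
  (0 : H →L[ℂ] H) ∈ J ∧
  (∀ x ∈ J, ∀ y ∈ J, x + y ∈ J) ∧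
  (∀ x ∈ J, -x ∈ J) ∧
  ∀ (A : H →L[ℂ] H), ∀ x ∈ J, A * x ∈ J ∧ x * A ∈ J

/-- `I` is a `J`-ideal: an additive subgroup of `B(H)` contained in `J` and closed
under left and right multiplication by elements of `J`. -/
def IsSubideal (J I : Set (H →L[ℂ] H)) : Prop :=
  I ⊆ J ∧ (0 : H →L[ℂ] H) ∈ I ∧
  (∀ x ∈ I, ∀ y ∈ I, x + y ∈ I) ∧
  (∀ x ∈ I, -x ∈ I) ∧
  ∀ A ∈ J, ∀ x ∈ I, A * x ∈ I ∧ x * A ∈ I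

/-- A linear `J`-ideal: a `J`-ideal closed under multiplication by complex scalars. -/
def IsLinearSubideal (J I : Set (H →L[ℂ] H)) : Prop :=
  IsSubideal J I ∧ ∀ (c : ℂ), ∀ x ∈ I, c • x ∈ I

/-- A real linear `J`-ideal: a `J`-ideal closed under multiplication by real scalars. -/
def IsRealSubideal (J I : Set (H →L[ℂ] H)) : Prop :=
  IsSubideal J I ∧ ∀ (r : ℝ), ∀ x ∈ I, r • x ∈ I

/-- `(𝒮)`: the smallest two-sided ideal of `B(H)` containing `𝒮`. -/
def genBH (𝒮 : Set (H →L[ℂ] H)) : Set (H →L[ℂ] H) :=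
  ⋂₀ {I | IsBHIdeal I ∧ 𝒮 ⊆ I}

/-- `⟨𝒮⟩_J`: the smallest `J`-ideal containing `𝒮`. -/
def genSub (J 𝒮 : Set (H →L[ℂ] H)) : Set (H →L[ℂ] H) :=
  ⋂₀ {I | IsSubideal J I ∧ 𝒮 ⊆ I}

/-- `(𝒮)_J`: the smallest linear `J`-ideal containing `𝒮`. -/
def genLin (J 𝒮 : Set (H →L[ℂ] H)) : Set (H →L[ℂ] H) :=
  ⋂₀ {I | IsLinearSubideal J I ∧ 𝒮 ⊆ I}

/-- `(𝒮)_J^ℝ`: the smallest real linear `J`-ideal containing `𝒮`. -/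
def genReal (J 𝒮 : Set (H →L[ℂ] H)) : Set (H →L[ℂ] H) :=
  ⋂₀ {I | IsRealSubideal J I ∧ 𝒮 ⊆ I}

/-- `J(𝒮)`: all finite sums `Σ Aᵢ Xᵢ` with `Aᵢ ∈ J` and `Xᵢ ∈ (𝒮)`. -/
def JGen (J 𝒮 : Set (H →L[ℂ] H)) : Set (H →L[ℂ] H) :=
  {T | ∃ (n : ℕ) (A X : Fin n → (H →L[ℂ] H)),
    (∀ i, A i ∈ J ∧ X i ∈ genBH 𝒮) ∧ T = ∑ i, A i * X i}

/-- `J(𝒮)J`: all finite sums `Σ Aᵢ Xᵢ Bᵢ` with `Aᵢ, Bᵢ ∈ J` and `Xᵢ ∈ (𝒮)`. -/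
def JGenJ (J 𝒮 : Set (H →L[ℂ] H)) : Set (H →L[ℂ] H) :=
  {T | ∃ (n : ℕ) (A X B : Fin n → (H →L[ℂ] H)),
    (∀ i, A i ∈ J ∧ X i ∈ genBH 𝒮 ∧ B i ∈ J) ∧ T = ∑ i, A i * X i * B i}

/-- `JS + SJ + J(S)J = {AS + SB + Y : A, B ∈ J, Y ∈ J(S)J}`. -/
def JSplus (J : Set (H →L[ℂ] H)) (S : H →L[ℂ] H) : Set (H →L[ℂ] H) :=
  {T | ∃ A ∈ J, ∃ B ∈ J, ∃ Y ∈ JGenJ J {S}, T = A * S + S * B + Y}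

/-- `K(H)`: the compact operators on `H`. -/
def KH : Set (H →L[ℂ] H) := {T | IsCompactOperator ⇑T}

/-- `T` is a finite-rank operator: its range is finite-dimensional. -/
def IsFiniteRank (T : H →L[ℂ] H) : Prop :=
  FiniteDimensional ℂ (LinearMap.range (T : H →ₗ[ℂ] H))

/-!
Every ideal of `B(H)` is closed under adjoints. With `R = |T|` one has `‖R x‖ = ‖T x‖`, so the maps
`R x ↦ T x` and `T x ↦ R x` extend, through the closures of the ranges and the orthogonal
projections onto them, to bounded operators `U`, `V` with `T = U R` and `R = V T`; hence
`T* = R U* = V T U*` lies in every ideal containing `T`.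

If `(S) = J(S)`, a `T ∈ (S)` has `T* = Σ Aᵢ Xᵢ` with `Aᵢ ∈ J`, `Xᵢ ∈ (S)`, so `T = Σ Xᵢ* Aᵢ*`, and
expanding each `Xᵢ* ∈ (S) = J(S)` once more puts `T` in `J(S)J`. Together with the formal
inclusions `J(S)J ⊆ ⟨S⟩_J ⊆ (S)_J^ℝ ⊆ (S)_J ⊆ (S)` and `J(S)J ⊆ J(S) ⊆ (S)` this closes a cycle
of inclusions; conversely `J(S)J = (S)` already gives `(S) ⊆ J(S)`.
-/

section IdealLattice

omit [CompleteSpace H]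

variable {I J : Set (H →L[ℂ] H)}

namespace IsBHIdeal

theorem zero_mem (hI : IsBHIdeal I) : (0 : H →L[ℂ] H) ∈ I :=
  hI.1

theorem add_mem (hI : IsBHIdeal I) {x y : H →L[ℂ] H} (hx : x ∈ I) (hy : y ∈ I) : x + y ∈ I :=
  hI.2.1 x hx y hy

theorem neg_mem (hI : IsBHIdeal I) {x : H →L[ℂ] H} (hx : x ∈ I) : -x ∈ I :=
  hI.2.2.1 x hx

theorem mul_mem_left (hI : IsBHIdeal I) (A : H →L[ℂ] H) {x : H →L[ℂ] H} (hx : x ∈ I) :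
    A * x ∈ I :=
  (hI.2.2.2 A x hx).1

theorem mul_mem_right (hI : IsBHIdeal I) (A : H →L[ℂ] H) {x : H →L[ℂ] H} (hx : x ∈ I) :
    x * A ∈ I :=
  (hI.2.2.2 A x hx).2

theorem sum_mem (hI : IsBHIdeal I) {ι : Type*} {s : Finset ι} {f : ι → H →L[ℂ] H}
    (hf : ∀ i ∈ s, f i ∈ I) : ∑ i ∈ s, f i ∈ I :=
  Finset.sum_induction f (· ∈ I) (fun _ _ => hI.add_mem) hI.zero_mem hf

theorem smul_mem (hI : IsBHIdeal I) (c : ℂ) {x : H →L[ℂ] H} (hx : x ∈ I) : c • x ∈ I := by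
  simpa using hI.mul_mem_left (c • 1) hx

theorem isLinearSubideal_inter (hI : IsBHIdeal I) (hJ : IsBHIdeal J) :
    IsLinearSubideal J (I ∩ J) :=
  ⟨⟨Set.inter_subset_right, ⟨hI.zero_mem, hJ.zero_mem⟩,
    fun _ hx _ hy => ⟨hI.add_mem hx.1 hy.1, hJ.add_mem hx.2 hy.2⟩,
    fun _ hx => ⟨hI.neg_mem hx.1, hJ.neg_mem hx.2⟩,
    fun A _ _ hx => ⟨⟨hI.mul_mem_left A hx.1, hJ.mul_mem_left A hx.2⟩,
      ⟨hI.mul_mem_right A hx.1, hJ.mul_mem_right A hx.2⟩⟩⟩,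
    fun c _ hx => ⟨hI.smul_mem c hx.1, hJ.smul_mem c hx.2⟩⟩

theorem isLinearSubideal_self (hJ : IsBHIdeal J) : IsLinearSubideal J J := by
  simpa using hJ.isLinearSubideal_inter hJ

end IsBHIdeal

namespace IsSubideal

theorem zero_mem (hI : IsSubideal J I) : (0 : H →L[ℂ] H) ∈ I :=
  hI.2.1

theorem add_mem (hI : IsSubideal J I) {x y : H →L[ℂ] H} (hx : x ∈ I) (hy : y ∈ I) : x + y ∈ I :=
  hI.2.2.1 x hx y hy

theorem neg_mem (hI : IsSubideal J I) {x : H →L[ℂ] H} (hx : x ∈ I) : -x ∈ I :=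
  hI.2.2.2.1 x hx

theorem mul_mem_left (hI : IsSubideal J I) {A x : H →L[ℂ] H} (hA : A ∈ J) (hx : x ∈ I) :
    A * x ∈ I :=
  (hI.2.2.2.2 A hA x hx).1

theorem mul_mem_right (hI : IsSubideal J I) {A x : H →L[ℂ] H} (hA : A ∈ J) (hx : x ∈ I) :
    x * A ∈ I :=
  (hI.2.2.2.2 A hA x hx).2

theorem sum_mem (hI : IsSubideal J I) {ι : Type*} {s : Finset ι} {f : ι → H →L[ℂ] H}
    (hf : ∀ i ∈ s, f i ∈ I) : ∑ i ∈ s, f i ∈ I :=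
  Finset.sum_induction f (· ∈ I) (fun _ _ => hI.add_mem) hI.zero_mem hf

end IsSubideal

theorem IsLinearSubideal.isRealSubideal (hI : IsLinearSubideal J I) : IsRealSubideal J I :=
  ⟨hI.1, fun r x hx => by rw [RCLike.real_smul_eq_coe_smul (K := ℂ)]; exact hI.2 r x hx⟩

theorem isBHIdeal_sInter {𝒞 : Set (Set (H →L[ℂ] H))} (h𝒞 : ∀ I ∈ 𝒞, IsBHIdeal I) :
    IsBHIdeal (⋂₀ 𝒞) :=
  ⟨fun I hI => (h𝒞 I hI).zero_mem, fun _ hx _ hy I hI => (h𝒞 I hI).add_mem (hx I hI) (hy I hI),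
    fun _ hx I hI => (h𝒞 I hI).neg_mem (hx I hI),
    fun A _ hx => ⟨fun I hI => (h𝒞 I hI).mul_mem_left A (hx I hI),
      fun I hI => (h𝒞 I hI).mul_mem_right A (hx I hI)⟩⟩

theorem isSubideal_sInter {𝒞 : Set (Set (H →L[ℂ] H))} (h𝒞 : ∀ I ∈ 𝒞, IsSubideal J I)
    (hne : 𝒞.Nonempty) : IsSubideal J (⋂₀ 𝒞) := by
  obtain ⟨I₀, hI₀⟩ := hne
  exact ⟨(Set.sInter_subset_of_mem hI₀).trans (h𝒞 I₀ hI₀).1, fun I hI => (h𝒞 I hI).zero_mem,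
    fun _ hx _ hy I hI => (h𝒞 I hI).add_mem (hx I hI) (hy I hI),
    fun _ hx I hI => (h𝒞 I hI).neg_mem (hx I hI),
    fun _ hA _ hx => ⟨fun I hI => (h𝒞 I hI).mul_mem_left hA (hx I hI),
      fun I hI => (h𝒞 I hI).mul_mem_right hA (hx I hI)⟩⟩

variable {𝒮 : Set (H →L[ℂ] H)}

theorem isBHIdeal_genBH (𝒮 : Set (H →L[ℂ] H)) : IsBHIdeal (genBH 𝒮) :=
  isBHIdeal_sInter fun _ hI => hI.1

theorem subset_genBH : 𝒮 ⊆ genBH 𝒮 :=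
  fun _ hx _ hI => hI.2 hx

theorem genBH_subset (hI : IsBHIdeal I) (h : 𝒮 ⊆ I) : genBH 𝒮 ⊆ I :=
  Set.sInter_subset_of_mem ⟨hI, h⟩

theorem isSubideal_genSub (hJ : IsBHIdeal J) (h𝒮 : 𝒮 ⊆ J) : IsSubideal J (genSub J 𝒮) :=
  isSubideal_sInter (fun _ hI => hI.1) ⟨J, hJ.isLinearSubideal_self.1, h𝒮⟩

theorem isRealSubideal_genReal (hJ : IsBHIdeal J) (h𝒮 : 𝒮 ⊆ J) :
    IsRealSubideal J (genReal J 𝒮) :=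
  ⟨isSubideal_sInter (fun _ hI => hI.1.1) ⟨J, hJ.isLinearSubideal_self.isRealSubideal, h𝒮⟩,
    fun r _ hx I hI => hI.1.2 r _ (hx I hI)⟩

theorem isLinearSubideal_genLin (hJ : IsBHIdeal J) (h𝒮 : 𝒮 ⊆ J) :
    IsLinearSubideal J (genLin J 𝒮) :=
  ⟨isSubideal_sInter (fun _ hI => hI.1.1) ⟨J, hJ.isLinearSubideal_self, h𝒮⟩,
    fun c _ hx I hI => hI.1.2 c _ (hx I hI)⟩

theorem genSub_subset_genReal (hJ : IsBHIdeal J) (h𝒮 : 𝒮 ⊆ J) :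
    genSub J 𝒮 ⊆ genReal J 𝒮 :=
  Set.sInter_subset_of_mem ⟨(isRealSubideal_genReal hJ h𝒮).1, fun _ hx _ hI => hI.2 hx⟩

theorem genReal_subset_genLin (hJ : IsBHIdeal J) (h𝒮 : 𝒮 ⊆ J) :
    genReal J 𝒮 ⊆ genLin J 𝒮 :=
  Set.sInter_subset_of_mem
    ⟨(isLinearSubideal_genLin hJ h𝒮).isRealSubideal, fun _ hx _ hI => hI.2 hx⟩

theorem genLin_subset_genBH (hJ : IsBHIdeal J) (h𝒮 : 𝒮 ⊆ J) : genLin J 𝒮 ⊆ genBH 𝒮 :=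
  (Set.sInter_subset_of_mem (show genBH 𝒮 ∩ J ∈ {I | IsLinearSubideal J I ∧ 𝒮 ⊆ I} from
    ⟨(isBHIdeal_genBH 𝒮).isLinearSubideal_inter hJ, Set.subset_inter subset_genBH h𝒮⟩)).trans
    Set.inter_subset_left

theorem mul_mul_mem_genSub (hJ : IsBHIdeal J) (h𝒮 : 𝒮 ⊆ J) {A X B : H →L[ℂ] H} (hA : A ∈ J)
    (hX : X ∈ genBH 𝒮) (hB : B ∈ J) : A * X * B ∈ genSub J 𝒮 := by
  have hsub := isSubideal_genSub hJ h𝒮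
  let I := {X | ∀ A ∈ J, ∀ B ∈ J, A * X * B ∈ genSub J 𝒮}
  have hI : IsBHIdeal I := by
    refine ⟨fun A _ B _ => by simpa using hsub.zero_mem, fun X hX Y hY A hA B hB => ?_,
      fun X hX A hA B hB => ?_, fun C X hX => ⟨fun A hA B hB => ?_, fun A hA B hB => ?_⟩⟩
    · simpa [mul_add, add_mul] using hsub.add_mem (hX A hA B hB) (hY A hA B hB)
    · simpa using hsub.neg_mem (hX A hA B hB)
    · simpa [mul_assoc] using hX (A * C) (hJ.mul_mem_right C hA) B hB
    · simpa [mul_assoc] using hX A hA (C * B) (hJ.mul_mem_left C hB)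
  have h𝒮I : 𝒮 ⊆ I := fun S hS A hA B hB =>
    hsub.mul_mem_right hB (hsub.mul_mem_left hA fun _ hI => hI.2 hS)
  exact genBH_subset hI h𝒮I hX A hA B hB

theorem JGenJ_subset_genSub (hJ : IsBHIdeal J) (h𝒮 : 𝒮 ⊆ J) : JGenJ J 𝒮 ⊆ genSub J 𝒮 := by
  rintro _ ⟨n, A, X, B, h, rfl⟩
  exact (isSubideal_genSub hJ h𝒮).sum_mem fun i _ =>
    mul_mul_mem_genSub hJ h𝒮 (h i).1 (h i).2.1 (h i).2.2

theorem JGen_subset_genBH : JGen J 𝒮 ⊆ genBH 𝒮 := by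
  rintro _ ⟨n, A, X, h, rfl⟩
  exact (isBHIdeal_genBH 𝒮).sum_mem fun i _ => (isBHIdeal_genBH 𝒮).mul_mem_left _ (h i).2

theorem JGenJ_subset_JGen : JGenJ J 𝒮 ⊆ JGen J 𝒮 := by
  rintro _ ⟨n, A, X, B, h, rfl⟩
  exact ⟨n, A, fun i => X i * B i,
    fun i => ⟨(h i).1, (isBHIdeal_genBH 𝒮).mul_mem_right _ (h i).2.1⟩, by simp [mul_assoc]⟩

theorem zero_mem_JGenJ : (0 : H →L[ℂ] H) ∈ JGenJ J 𝒮 :=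
  ⟨0, Fin.elim0, Fin.elim0, Fin.elim0, fun i => i.elim0, by simp⟩

theorem add_mem_JGenJ {x y : H →L[ℂ] H} (hx : x ∈ JGenJ J 𝒮) (hy : y ∈ JGenJ J 𝒮) :
    x + y ∈ JGenJ J 𝒮 := by
  obtain ⟨m, A, X, B, hx, rfl⟩ := hx
  obtain ⟨n, A', X', B', hy, rfl⟩ := hy
  refine ⟨m + n, Fin.append A A', Fin.append X X', Fin.append B B',
    Fin.addCases (fun i => ?_) (fun i => ?_), by simp [Fin.sum_univ_add]⟩
  · simpa using hx i
  · simpa using hy i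

theorem sum_mem_JGenJ {ι : Type*} {s : Finset ι} {f : ι → H →L[ℂ] H}
    (hf : ∀ i ∈ s, f i ∈ JGenJ J 𝒮) : ∑ i ∈ s, f i ∈ JGenJ J 𝒮 :=
  Finset.sum_induction f (· ∈ JGenJ J 𝒮) (fun _ _ => add_mem_JGenJ) zero_mem_JGenJ hf

theorem mul_mem_JGenJ_of_mem_JGen {Y B : H →L[ℂ] H} (hY : Y ∈ JGen J 𝒮) (hB : B ∈ J) :
    Y * B ∈ JGenJ J 𝒮 := by
  obtain ⟨n, A, X, h, rfl⟩ := hY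
  exact ⟨n, A, X, fun _ => B, fun i => ⟨(h i).1, (h i).2, hB⟩, Finset.sum_mul _ _ _⟩

end IdealLattice

-- The easy half of Douglas' factorization lemma.
theorem ContinuousLinearMap.exists_eq_comp_of_norm_le_mul
    {𝕜 E F G : Type*} [RCLike 𝕜] [NormedAddCommGroup E] [NormedSpace 𝕜 E]
    [NormedAddCommGroup F] [NormedSpace 𝕜 F] [CompleteSpace F]
    [NormedAddCommGroup G] [InnerProductSpace 𝕜 G] [CompleteSpace G]
    (A : E →L[𝕜] F) (B : E →L[𝕜] G) (C : ℝ) (h : ∀ x, ‖A x‖ ≤ C * ‖B x‖) :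
    ∃ W : G →L[𝕜] F, A = W ∘L B := by
  set M := (LinearMap.range (B : E →ₗ[𝕜] G)).topologicalClosure
  let e : E →ₗ[𝕜] M := (B : E →ₗ[𝕜] G).codRestrict M fun x =>
    Submodule.le_topologicalClosure _ (LinearMap.mem_range_self _ x)
  have he : DenseRange e := by
    rw [DenseRange, Subtype.dense_iff, ← Set.range_comp]
    exact fun y hy => hy
  refine ⟨(A : E →ₗ[𝕜] F).extendOfNorm e ∘L M.orthogonalProjectionOnto, ?_⟩
  ext x
  have hproj : M.orthogonalProjectionOnto (B x) = e x :=
    Submodule.orthogonalProjectionOnto_mem_subspace_eq_self (e x)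
  simp [hproj, LinearMap.extendOfNorm_eq he ⟨C, h⟩]

theorem ContinuousLinearMap.norm_cfcAbs_apply (T : H →L[ℂ] H) (x : H) :
    ‖CFC.abs T x‖ = ‖T x‖ := by
  have hsq : star (CFC.abs T) * CFC.abs T = star T * T := by
    rw [(CFC.abs_nonneg T).isSelfAdjoint.star_eq, CFC.abs_mul_abs]
  have hnorm_sq (A : H →L[ℂ] H) : ‖A x‖ ^ 2 = RCLike.re (inner ℂ ((star A * A) x) x) := by
    rw [star_eq_adjoint]
    exact apply_norm_sq_eq_inner_adjoint_left A x
  exact (pow_left_inj₀ (norm_nonneg _) (norm_nonneg _) two_ne_zero).1 (by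
    rw [hnorm_sq, hnorm_sq, hsq])

theorem ContinuousLinearMap.exists_star_eq_mul_mul (T : H →L[ℂ] H) :
    ∃ V W : H →L[ℂ] H, star T = V * T * W := by
  obtain ⟨U, hU⟩ := T.exists_eq_comp_of_norm_le_mul (CFC.abs T) 1 fun x => by
    rw [one_mul, norm_cfcAbs_apply]
  obtain ⟨V, hV⟩ := (CFC.abs T).exists_eq_comp_of_norm_le_mul T 1 fun x => by
    rw [one_mul, norm_cfcAbs_apply]
  refine ⟨V, star U, ?_⟩
  calc star T = star (U * CFC.abs T) := congrArg star hU
    _ = CFC.abs T * star U := by rw [star_mul, (CFC.abs_nonneg T).isSelfAdjoint.star_eq]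
    _ = V * T * star U := by rw [hV]; rfl

theorem IsBHIdeal.star_mem {I : Set (H →L[ℂ] H)} (hI : IsBHIdeal I) {T : H →L[ℂ] H}
    (hT : T ∈ I) : star T ∈ I := by
  obtain ⟨V, W, h⟩ := T.exists_star_eq_mul_mul
  exact h ▸ hI.mul_mem_right W (hI.mul_mem_left V hT)

theorem genBH_subset_JGenJ_of_eq_JGen {J 𝒮 : Set (H →L[ℂ] H)} (hJ : IsBHIdeal J)
    (hsoft : genBH 𝒮 = JGen J 𝒮) : genBH 𝒮 ⊆ JGenJ J 𝒮 := by
  have hP := isBHIdeal_genBH 𝒮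
  intro T hT
  obtain ⟨n, A, X, h, hstar⟩ : star T ∈ JGen J 𝒮 := hsoft ▸ hP.star_mem hT
  have hT_eq : T = ∑ i, star (X i) * star (A i) := by
    simpa [star_sum, star_mul] using congrArg star hstar
  rw [hT_eq]
  exact sum_mem_JGenJ fun i _ =>
    mul_mem_JGenJ_of_mem_JGen (hsoft ▸ hP.star_mem (h i).2) (hJ.star_mem (h i).1)

/-- `(S)` is `J`-soft iff `J(S)J = (S) = ⟨S⟩_J = (S)_J = (S)_J^ℝ`,
in which case `(S) = J(S) = J(S)J`. -/
theorem stmt_5 (J : Set (H →L[ℂ] H)) (hJ : IsBHIdeal J)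
    (S : H →L[ℂ] H) (hS : S ∈ J) :
    ((genBH {S} = JGen J {S}) ↔
      (JGenJ J {S} = genBH {S} ∧ genBH {S} = genSub J {S} ∧
       genSub J {S} = genLin J {S} ∧ genLin J {S} = genReal J {S})) ∧
    (genBH {S} = JGen J {S} → genBH {S} = JGenJ J {S}) := by
  have hS' : {S} ⊆ J := Set.singleton_subset_iff.2 hS
  have hSubReal := genSub_subset_genReal hJ hS'
  have hRealLin := genReal_subset_genLin hJ hS'
  have hLinBH := genLin_subset_genBH hJ hS'
  have hJJSub := JGenJ_subset_genSub hJ hS'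
  have hJJBH : JGenJ J {S} ⊆ genBH {S} := JGenJ_subset_JGen.trans JGen_subset_genBH
  refine ⟨⟨fun hsoft => ?_, fun ⟨hJJ, _⟩ => ?_⟩,
    fun hsoft => (genBH_subset_JGenJ_of_eq_JGen hJ hsoft).antisymm hJJBH⟩
  · have hBJJ := genBH_subset_JGenJ_of_eq_JGen hJ hsoft
    exact ⟨hJJBH.antisymm hBJJ,
      (hBJJ.trans hJJSub).antisymm ((hSubReal.trans hRealLin).trans hLinBH),
      (hSubReal.trans hRealLin).antisymm ((hLinBH.trans hBJJ).trans hJJSub),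
      (((hLinBH.trans hBJJ).trans hJJSub).trans hSubReal).antisymm hRealLin⟩
  · exact (hJJ.superset.trans JGenJ_subset_JGen).antisymm JGen_subset_genBH
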